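/- Let ψ be a unit vector in ℂ^{d_1}⊗ℂ^{d_2} with Schmidt decomposition ψ = ∑_i λ_i e_i ⊗ f_i and largest Schmidt coefficient λ = max_i λ_i. Then the fidelity of separability of the pure state |ψ⟩⟨ψ| equals λ²: F_sep(|ψ⟩⟨ψ|) = λ². -/

import Mathlib

open scoped BigOperators ComplexOrder

noncomputable section

/-- Inner product `⟨u,v⟩ = ∑ x, conj (u x) * v x` on functions `ι → ℂ`. -/
def inn {ι : Type*} [Fintype ι] (u v : ι → ℂ) : ℂ := ∑ x, star (u x) * v x

/-- Unit vector. -/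
def IsUnitVec {ι : Type*} [Fintype ι] (v : ι → ℂ) : Prop := inn v v = 1

/-- Rank-one projector `|v⟩⟨v|`. -/
def proj {ι : Type*} [Fintype ι] (v : ι → ℂ) : Matrix ι ι ℂ :=
  fun x y => v x * star (v y)

/-- Positive semidefinite square root (zero on non-PSD matrices). -/
def psqrt {ι : Type*} [Fintype ι] [DecidableEq ι] (A : Matrix ι ι ℂ) : Matrix ι ι ℂ :=
  open scoped Classical in if h : A.PosSemidef then
    (h.1.eigenvectorUnitary : Matrix ι ι ℂ) * Matrix.diagonal ((↑) ∘ (√·) ∘ h.1.eigenvalues) *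
      (star h.1.eigenvectorUnitary : Matrix ι ι ℂ) else 0

/-- Fidelity `F(ρ,σ) = (Tr √(√ρ σ √ρ))²`. -/
def fid {ι : Type*} [Fintype ι] [DecidableEq ι] (ρ σ : Matrix ι ι ℂ) : ℝ :=
  ((psqrt (psqrt ρ * σ * psqrt ρ)).trace.re) ^ 2

/-- Product vector on the bipartite Hilbert space. -/
def IsProdVec2 {d1 d2 : ℕ} (v : Fin d1 × Fin d2 → ℂ) : Prop :=
  ∃ (a : Fin d1 → ℂ) (b : Fin d2 → ℂ), ∀ x, v x = a x.1 * b x.2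

/-- Separable state: finite convex combination of projectors onto product unit vectors. -/
def IsSepState2 {d1 d2 : ℕ} (σ : Matrix (Fin d1 × Fin d2) (Fin d1 × Fin d2) ℂ) : Prop :=
  ∃ (k : ℕ) (p : Fin k → ℝ) (φ : Fin k → Fin d1 × Fin d2 → ℂ),
    (∀ i, 0 ≤ p i) ∧ ∑ i, p i = 1 ∧
    (∀ i, IsProdVec2 (φ i) ∧ IsUnitVec (φ i)) ∧
    σ = ∑ i, (p i : ℂ) • proj (φ i)

/-- Fidelity of separability. -/
def Fsep2 {d1 d2 : ℕ} (ρ : Matrix (Fin d1 × Fin d2) (Fin d1 × Fin d2) ℂ) : ℝ :=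
  sSup {x | ∃ σ, IsSepState2 σ ∧ x = fid ρ σ}

/-!
For a pure state, `F(|ψ⟩⟨ψ|, σ) = ⟨ψ|σ|ψ⟩`, so for separable `σ` the fidelity is an average of
overlaps `|⟨a ⊗ b, ψ⟩|²` with product unit vectors. Expanding `ψ` in its Schmidt basis,
`|⟨a ⊗ b, ψ⟩| ≤ ∑ λᵢ |⟨eᵢ, a⟩| |⟨fᵢ, b⟩| ≤ λ` by Cauchy–Schwarz and Bessel's inequality, and the
product vector `eⱼ ⊗ fⱼ` with `λⱼ = λ` attains the bound.
-/

open Matrix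

section Vectors

variable {ι : Type*} [Fintype ι]

lemma inn_eq_star_dotProduct (u v : ι → ℂ) : inn u v = star u ⬝ᵥ v := rfl

lemma star_inn (u v : ι → ℂ) : star (inn u v) = inn v u := by
  simp only [inn, star_sum, star_mul', star_star, mul_comm]

lemma norm_inn_comm (u v : ι → ℂ) : ‖inn u v‖ = ‖inn v u‖ := by
  rw [← star_inn, norm_star]

lemma inn_self_im (u : ι → ℂ) : (inn u u).im = 0 :=
  (Finset.sum_nonneg fun x _ => star_mul_self_nonneg (u x) : (0 : ℂ) ≤ inn u u).2.symm

lemma inn_eq_inner (u v : ι → ℂ) :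
    inn u v = inner ℂ (WithLp.toLp 2 u) (WithLp.toLp 2 v) := by
  rw [EuclideanSpace.inner_toLp_toLp, dotProduct_comm]
  rfl

lemma sum_norm_inn_sq_le {n : Type*} [Fintype n] [DecidableEq n] (v : n → ι → ℂ)
    (hv : ∀ i j, inn (v i) (v j) = if i = j then 1 else 0) (x : ι → ℂ) :
    ∑ i, ‖inn (v i) x‖ ^ 2 ≤ (inn x x).re := by
  have hV : Orthonormal ℂ fun i => WithLp.toLp 2 (v i) := by
    rw [orthonormal_iff_ite]
    intro i j
    rw [← inn_eq_inner, hv]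
  have := hV.sum_inner_products_le (s := Finset.univ) (WithLp.toLp 2 x)
  simp_rw [← inner_self_eq_norm_sq (𝕜 := ℂ) (WithLp.toLp 2 x), ← inn_eq_inner] at this
  exact this

end Vectors

section Schmidt

variable {ι κ n : Type*} [Fintype ι] [Fintype κ] [Fintype n]

def tensorVec (a : ι → ℂ) (b : κ → ℂ) : ι × κ → ℂ := fun x => a x.1 * b x.2

lemma inn_tensorVec (a c : ι → ℂ) (b d : κ → ℂ) :
    inn (tensorVec a b) (tensorVec c d) = inn a c * inn b d := by
  simp only [inn, tensorVec, Fintype.sum_prod_type, Finset.sum_mul_sum, star_mul']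
  exact Finset.sum_congr rfl fun _ _ => Finset.sum_congr rfl fun _ _ => by ring

lemma inn_tensorVec_of_schmidt {ψ : ι × κ → ℂ} {c : n → ℂ} {e : n → ι → ℂ} {f : n → κ → ℂ}
    (hψ : ∀ x, ψ x = ∑ i, c i * e i x.1 * f i x.2) (a : ι → ℂ) (b : κ → ℂ) :
    inn (tensorVec a b) ψ = ∑ i, c i * (inn a (e i) * inn b (f i)) := by
  have hψ' : ψ = ∑ i, c i • tensorVec (e i) (f i) :=
    funext fun x => by simp [hψ, tensorVec, Finset.sum_apply, mul_assoc]
  simp only [hψ', inn_eq_star_dotProduct, dotProduct_sum, dotProduct_smul, smul_eq_mul]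
  simp only [← inn_eq_star_dotProduct, inn_tensorVec]

variable [DecidableEq n] {e : n → ι → ℂ} {f : n → κ → ℂ}

lemma inn_tensorVec_of_schmidt_self {ψ : ι × κ → ℂ} {c : n → ℂ}
    (he : ∀ i j, inn (e i) (e j) = if i = j then 1 else 0)
    (hf : ∀ i j, inn (f i) (f j) = if i = j then 1 else 0)
    (hψ : ∀ x, ψ x = ∑ i, c i * e i x.1 * f i x.2) (j : n) :
    inn (tensorVec (e j) (f j)) ψ = c j := by
  rw [inn_tensorVec_of_schmidt hψ, Finset.sum_eq_single j]
  · simp [he, hf]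
  · intro i _ hij
    simp [he, hf, Ne.symm hij]
  · simp

lemma sq_sum_norm_inn_mul_le (he : ∀ i j, inn (e i) (e j) = if i = j then 1 else 0)
    (hf : ∀ i j, inn (f i) (f j) = if i = j then 1 else 0) (a : ι → ℂ) (b : κ → ℂ) :
    (∑ i, ‖inn (e i) a‖ * ‖inn (f i) b‖) ^ 2 ≤ (inn (tensorVec a b) (tensorVec a b)).re :=
  calc (∑ i, ‖inn (e i) a‖ * ‖inn (f i) b‖) ^ 2
      ≤ (∑ i, ‖inn (e i) a‖ ^ 2) * ∑ i, ‖inn (f i) b‖ ^ 2 :=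
        Finset.sum_mul_sq_le_sq_mul_sq _ _ _
    _ ≤ (inn a a).re * (inn b b).re :=
        mul_le_mul (sum_norm_inn_sq_le e he a) (sum_norm_inn_sq_le f hf b)
          (Finset.sum_nonneg fun _ _ => sq_nonneg _)
          ((sum_norm_inn_sq_le e he a).trans' (by positivity))
    _ = (inn (tensorVec a b) (tensorVec a b)).re := by
        rw [inn_tensorVec, Complex.mul_re, inn_self_im, inn_self_im, mul_zero, sub_zero]

lemma norm_inn_tensorVec_of_schmidt_le {ψ : ι × κ → ℂ} {c : n → ℂ} {l : ℝ}
    (he : ∀ i j, inn (e i) (e j) = if i = j then 1 else 0)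
    (hf : ∀ i j, inn (f i) (f j) = if i = j then 1 else 0)
    (hψ : ∀ x, ψ x = ∑ i, c i * e i x.1 * f i x.2) (hc : ∀ i, ‖c i‖ ≤ l) (hl : 0 ≤ l)
    {a : ι → ℂ} {b : κ → ℂ} (hab : IsUnitVec (tensorVec a b)) :
    ‖inn (tensorVec a b) ψ‖ ≤ l := by
  have hsum : ∑ i, ‖inn (e i) a‖ * ‖inn (f i) b‖ ≤ 1 := by
    have := sq_sum_norm_inn_mul_le he hf a b
    rw [hab, Complex.one_re] at this
    exact (pow_le_one_iff_of_nonneg (by positivity) two_ne_zero).mp this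
  calc ‖inn (tensorVec a b) ψ‖
      ≤ ∑ i, ‖c i‖ * (‖inn (e i) a‖ * ‖inn (f i) b‖) := by
        rw [inn_tensorVec_of_schmidt hψ]
        refine (norm_sum_le _ _).trans_eq (Finset.sum_congr rfl fun i _ => ?_)
        rw [norm_mul, norm_mul, norm_inn_comm a, norm_inn_comm b]
    _ ≤ ∑ i, l * (‖inn (e i) a‖ * ‖inn (f i) b‖) :=
        Finset.sum_le_sum fun i _ => mul_le_mul_of_nonneg_right (hc i) (by positivity)
    _ ≤ l := by
        rw [← Finset.mul_sum]
        exact mul_le_of_le_one_right hl hsum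

end Schmidt

section Fidelity

variable {ι : Type*} [Fintype ι]

lemma proj_eq_vecMulVec (v : ι → ℂ) : proj v = vecMulVec v (star v) := rfl

lemma proj_posSemidef (v : ι → ℂ) : (proj v).PosSemidef :=
  posSemidef_vecMulVec_self_star v

lemma proj_mul_mul_proj (v : ι → ℂ) (M : Matrix ι ι ℂ) :
    proj v * M * proj v = (star v ⬝ᵥ (M *ᵥ v)) • proj v := by
  rw [proj_eq_vecMulVec, vecMulVec_mul, vecMulVec_mul_vecMulVec, vecMulVec_smul,
    ← dotProduct_mulVec]

lemma proj_mul_self {v : ι → ℂ} (hv : IsUnitVec v) : proj v * proj v = proj v := by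
  rw [proj_eq_vecMulVec, vecMulVec_mul_vecMulVec, ← inn_eq_star_dotProduct, hv, one_smul]

lemma star_dotProduct_proj_mulVec (v x : ι → ℂ) :
    star x ⬝ᵥ (proj v *ᵥ x) = Complex.normSq (inn v x) := by
  rw [proj_eq_vecMulVec, vecMulVec_mulVec, op_smul_eq_smul, dotProduct_smul, smul_eq_mul,
    ← inn_eq_star_dotProduct, ← inn_eq_star_dotProduct, Complex.normSq_eq_conj_mul_self,
    ← star_inn v x, mul_comm]
  rfl

variable [DecidableEq ι]

open scoped MatrixOrder in
lemma psqrt_eq_sqrt {A : Matrix ι ι ℂ} (hA : A.PosSemidef) : psqrt A = CFC.sqrt A := by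
  rw [psqrt, dif_pos hA, CFC.sqrt_eq_cfc, cfc_nnreal_eq_real _ A hA.nonneg, hA.1.cfc_eq,
    IsHermitian.cfc, Unitary.conjStarAlgAut_apply]
  unfold Real.sqrt
  rfl

open scoped MatrixOrder in
lemma psqrt_smul_proj {v : ι → ℂ} (hv : IsUnitVec v) {c : ℝ} (hc : 0 ≤ c) :
    psqrt ((c : ℂ) • proj v) = (√c : ℂ) • proj v := by
  have hpsd {r : ℝ} (hr : 0 ≤ r) : ((r : ℂ) • proj v).PosSemidef :=
    (proj_posSemidef v).smul (Complex.zero_le_real.mpr hr)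
  rw [psqrt_eq_sqrt (hpsd hc)]
  refine CFC.sqrt_unique ?_ (hpsd (Real.sqrt_nonneg c)).nonneg
  rw [smul_mul_smul_comm, proj_mul_self hv, ← Complex.ofReal_mul, Real.mul_self_sqrt hc]

lemma fid_proj_left {ψ : ι → ℂ} (hψ : IsUnitVec ψ) {σ : Matrix ι ι ℂ} (hσ : σ.PosSemidef) :
    fid (proj ψ) σ = (star ψ ⬝ᵥ (σ *ᵥ ψ)).re := by
  obtain ⟨c, hc, hcσ⟩ : ∃ c : ℝ, 0 ≤ c ∧ (c : ℂ) = star ψ ⬝ᵥ (σ *ᵥ ψ) :=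
    RCLike.nonneg_iff_exists_ofReal.mp (hσ.dotProduct_mulVec_nonneg ψ)
  have hψψ : psqrt (proj ψ) = proj ψ := by simpa using psqrt_smul_proj hψ zero_le_one
  rw [fid, hψψ, proj_mul_mul_proj, ← hcσ, psqrt_smul_proj hψ hc, trace_smul,
    proj_eq_vecMulVec, trace_vecMulVec, dotProduct_comm, ← inn_eq_star_dotProduct, hψ,
    smul_eq_mul, mul_one, Complex.ofReal_re, Complex.ofReal_re, Real.sq_sqrt hc]

lemma fid_proj_proj {ψ : ι → ℂ} (hψ : IsUnitVec ψ) (φ : ι → ℂ) :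
    fid (proj ψ) (proj φ) = Complex.normSq (inn φ ψ) := by
  rw [fid_proj_left hψ (proj_posSemidef φ), star_dotProduct_proj_mulVec, Complex.ofReal_re]

end Fidelity

section Separable

variable {d1 d2 : ℕ}

lemma IsSepState2.posSemidef {σ : Matrix (Fin d1 × Fin d2) (Fin d1 × Fin d2) ℂ}
    (hσ : IsSepState2 σ) : σ.PosSemidef := by
  obtain ⟨k, p, φ, hp, -, -, rfl⟩ := hσ
  exact posSemidef_sum _ fun i _ =>
    (proj_posSemidef (φ i)).smul (Complex.zero_le_real.mpr (hp i))

lemma isSepState2_proj {φ : Fin d1 × Fin d2 → ℂ} (hφ : IsProdVec2 φ) (hu : IsUnitVec φ) :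
    IsSepState2 (proj φ) :=
  ⟨1, fun _ => 1, fun _ => φ, fun _ => zero_le_one, by simp, fun _ => ⟨hφ, hu⟩, by simp⟩

lemma fid_proj_le_of_isSepState2 {ψ : Fin d1 × Fin d2 → ℂ} (hψ : IsUnitVec ψ)
    {σ : Matrix (Fin d1 × Fin d2) (Fin d1 × Fin d2) ℂ} (hσ : IsSepState2 σ) {M : ℝ}
    (hM : ∀ φ, IsProdVec2 φ → IsUnitVec φ → Complex.normSq (inn φ ψ) ≤ M) :
    fid (proj ψ) σ ≤ M := by
  rw [fid_proj_left hψ hσ.posSemidef]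
  obtain ⟨k, p, φ, hp, hp1, hφ, rfl⟩ := hσ
  calc (star ψ ⬝ᵥ ((∑ i, (p i : ℂ) • proj (φ i)) *ᵥ ψ)).re
      = ∑ i, p i * Complex.normSq (inn (φ i) ψ) := by
        simp only [Matrix.sum_mulVec, dotProduct_sum, Matrix.smul_mulVec, dotProduct_smul,
          star_dotProduct_proj_mulVec, smul_eq_mul, ← Complex.ofReal_mul, ← Complex.ofReal_sum,
          Complex.ofReal_re]
    _ ≤ ∑ i, p i * M :=
        Finset.sum_le_sum fun i _ => mul_le_mul_of_nonneg_left (hM _ (hφ i).1 (hφ i).2) (hp i)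
    _ = M := by rw [← Finset.sum_mul, hp1, one_mul]

end Separable

/-- for a bipartite pure state with largest Schmidt coefficient `l`,
the fidelity of separability of `|ψ⟩⟨ψ|` equals `l²`. -/
theorem fsep_pure_bipartite_eq_sq_max_schmidt (d1 d2 k : ℕ)
    (ψ : Fin d1 × Fin d2 → ℂ) (hψ : IsUnitVec ψ)
    (lam : Fin k → ℝ) (hlam : ∀ i, 0 ≤ lam i)
    (e : Fin k → Fin d1 → ℂ) (f : Fin k → Fin d2 → ℂ)
    (he : ∀ i j, inn (e i) (e j) = if i = j then 1 else 0)
    (hf : ∀ i j, inn (f i) (f j) = if i = j then 1 else 0)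
    (hdecomp : ∀ x, ψ x = ∑ i, (lam i : ℂ) * e i x.1 * f i x.2)
    (l : ℝ) (hl : IsGreatest (Set.range lam) l) :
    Fsep2 (proj ψ) = l ^ 2 := by
  obtain ⟨⟨j, rfl⟩, hmax⟩ := hl
  have hunit : IsUnitVec (tensorVec (e j) (f j)) := by
    rw [IsUnitVec, inn_tensorVec, he, hf, if_pos rfl, one_mul]
  refine IsGreatest.csSup_eq
    ⟨⟨proj (tensorVec (e j) (f j)), isSepState2_proj ⟨e j, f j, fun _ => rfl⟩ hunit, ?_⟩, ?_⟩
  · rw [fid_proj_proj hψ, inn_tensorVec_of_schmidt_self he hf hdecomp, Complex.normSq_ofReal, sq]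
  · rintro _ ⟨σ, hσ, rfl⟩
    refine fid_proj_le_of_isSepState2 hψ hσ fun φ ⟨a, b, hab⟩ hφ => ?_
    obtain rfl : φ = tensorVec a b := funext hab
    have hcoeff (i : Fin k) : ‖(lam i : ℂ)‖ ≤ lam j := by
      rw [Complex.norm_real, Real.norm_of_nonneg (hlam i)]
      exact hmax ⟨i, rfl⟩
    rw [Complex.normSq_eq_norm_sq]
    exact pow_le_pow_left₀ (norm_nonneg _)
      (norm_inn_tensorVec_of_schmidt_le he hf hdecomp hcoeff (hlam j) hφ) 2
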